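/- arXiv:2009.14337 — 4 statements merged into one kernel-verified Lean document; each statement's English description precedes it below -/
import Mathlib

section
/- In the random-feature setting, let ε > 0 and δ ∈ (0,1). If K ≥ max(2·ln(1/δ), 1) · C²·N²/ε², then with probability at least 1 − δ over an i.i.d. sample (g_1,…,g_K) drawn from φ*, one has Δ_K(g_1,…,g_K) = sqrt(Σ_{x∈T} χ(x)·(f2(x) − f1(x))²) ≤ 2ε. -/
/-!
Write `Y_g(x) = (φ1(g)/φ*(g))·f_g(x)`, so that `f1 = E_{g∼φ*}[Y_g]`, `f2` is the empirical mean of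
`Y_{g_1}, …, Y_{g_K}`, and `0 ≤ Y_g ≤ C·N`. Pointwise in `x` the variance of `f2(x)` is at most
`(C·N)²/(4K)` (Popoviciu), hence `E[Δ_K]² ≤ E[Δ_K²] ≤ (C·N)²/(4K) ≤ ε²`. Replacing one sample point
moves `f2` by at most `C·N/K` in sup norm, hence `Δ_K` by at most `C·N/K`, and McDiarmid's
inequality bounds `P(Δ_K ≥ E[Δ_K] + ε)` by `exp(-K·ε²/(2·C²·N²)) ≤ δ`.

The σ-algebra on `Ψ` in the statement is arbitrary, so all of this is done for the discrete
σ-algebra and transported back through a measurable hull of the event.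
-/

open MeasureTheory

/-- The random-feature approximation `f2`: the importance-weighted average of the
features `f (gs i)` over a sample `gs : Fin K → Ψ`. -/
noncomputable def featAvg {T Ψ : Type*} (φs φ1 : PMF Ψ) (f : Ψ → T → ℝ)
    {K : ℕ} (gs : Fin K → Ψ) (x : T) : ℝ :=
  (1 / (K : ℝ)) * ∑ i, ((φ1 (gs i)).toReal / (φs (gs i)).toReal) * f (gs i) x

/-- The target function `f1 x = Σ_g φ1(g) · f_g(x)`. -/
noncomputable def featExp {T Ψ : Type*} (φ1 : PMF Ψ) (f : Ψ → T → ℝ) (x : T) : ℝ :=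
  ∑' g, (φ1 g).toReal * f g x

/-- `Δ_K(g_1,…,g_K) = sqrt(Σ_{x∈T} χ(x)·(f2(x) − f1(x))²)`, the `‖·‖_χ` distance
between the random-feature approximation and the target. -/
noncomputable def deltaK {T Ψ : Type*} [Fintype T] (χ : T → ℝ) (φs φ1 : PMF Ψ)
    (f : Ψ → T → ℝ) {K : ℕ} (gs : Fin K → Ψ) : ℝ :=
  Real.sqrt (∑ x, χ x * (featAvg φs φ1 f gs x - featExp φ1 f x) ^ 2)

open ProbabilityTheory Real
open scoped NNReal

lemma integrable_of_abs_le {α : Type*} [MeasurableSpace α] [DiscreteMeasurableSpace α]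
    {μ : Measure α} [IsFiniteMeasure μ] {F : α → ℝ} {B : ℝ} (hF : ∀ a, |F a| ≤ B) :
    Integrable F μ :=
  .of_bound Measurable.of_discrete.aestronglyMeasurable B (ae_of_all _ hF)

lemma integrable_exp_mul_of_abs_le {α : Type*} [MeasurableSpace α] [DiscreteMeasurableSpace α]
    {μ : Measure α} [IsFiniteMeasure μ] {H : α → ℝ} {B : ℝ} (hH : ∀ a, |H a| ≤ B) (t : ℝ) :
    Integrable (fun a => exp (t * H a)) μ := by
  refine integrable_of_abs_le (B := exp (|t| * B)) fun a => ?_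
  rw [abs_exp, exp_le_exp]
  exact (le_abs_self _).trans (by rw [abs_mul]; gcongr; exact hH a)

lemma abs_integral_le_of_abs_le {α : Type*} [MeasurableSpace α] {μ : Measure α}
    [IsProbabilityMeasure μ] {F : α → ℝ} {B : ℝ} (hF : ∀ a, |F a| ≤ B) :
    |∫ a, F a ∂μ| ≤ B := by
  simpa using norm_integral_le_of_norm_le_const (μ := μ) (f := F) (ae_of_all _ hF)

lemma integral_pi_fin_succ {Ω : Type*} [MeasurableSpace Ω] {p : Measure Ω} [SigmaFinite p]
    {K : ℕ} {H : (Fin (K + 1) → Ω) → ℝ} (hH : Integrable H (Measure.pi fun _ => p)) :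
    ∫ gs, H gs ∂(Measure.pi fun _ => p) =
      ∫ y, ∫ a, H (Fin.cons a y) ∂p ∂(Measure.pi fun _ => p) := by
  have e := (measurePreserving_piFinSuccAbove (fun _ : Fin (K + 1) => p) 0).symm
  rw [← e.integral_comp', integral_prod_symm]
  · simp [MeasurableEquiv.piFinSuccAbove_symm_apply, Fin.insertNthEquiv]
  · exact (e.integrable_comp_emb (MeasurableEquiv.measurableEmbedding _)).2 hH

section SampleMean

variable {Ω : Type*} [MeasurableSpace Ω] {p : Measure Ω} [IsProbabilityMeasure p] {K : ℕ}

lemma sq_integral_le_integral_sq {X : Ω → ℝ} (hX : MemLp X 2 p) :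
    (∫ ω, X ω ∂p) ^ 2 ≤ ∫ ω, X ω ^ 2 ∂p := by
  have := variance_nonneg X p
  rw [variance_eq_sub hX] at this
  simpa [sub_nonneg] using this

lemma integral_pi_sampleMean (hK : K ≠ 0) {X : Ω → ℝ} (hX : Integrable X p) :
    ∫ gs, 1 / (K : ℝ) * ∑ i, X (gs i) ∂(Measure.pi fun _ : Fin K => p) = ∫ ω, X ω ∂p := by
  have heval : ∀ i, ∫ gs, X (gs i) ∂(Measure.pi fun _ : Fin K => p) = ∫ ω, X ω ∂p :=
    fun i => integral_comp_eval hX.aestronglyMeasurable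
  rw [integral_const_mul, integral_finsetSum _ fun i _ => integrable_comp_eval hX]
  simp [heval, hK]

lemma variance_pi_sampleMean {X : Ω → ℝ} (hX : MemLp X 2 p) :
    Var[fun gs => 1 / (K : ℝ) * ∑ i, X (gs i); Measure.pi fun _ : Fin K => p] = Var[X; p] / K := by
  have hsum : (fun gs : Fin K → Ω => ∑ i, X (gs i)) = ∑ i : Fin K, fun gs => X (gs i) := by
    ext gs
    simp
  rw [variance_const_mul, hsum, variance_sum_pi fun _ => hX]
  simp only [Finset.sum_const, Finset.card_univ, Fintype.card_fin, nsmul_eq_mul]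
  by_cases hK : (K : ℝ) = 0
  · simp [hK]
  · field_simp

lemma integral_sq_sampleMean_sub_le (hK : K ≠ 0) {X : Ω → ℝ} {a b : ℝ} (hXm : Measurable X)
    (hX : ∀ ω, X ω ∈ Set.Icc a b) :
    ∫ gs, (1 / (K : ℝ) * ∑ i, X (gs i) - ∫ ω, X ω ∂p) ^ 2 ∂(Measure.pi fun _ : Fin K => p)
      ≤ ((b - a) / 2) ^ 2 / K := by
  have hL2 : MemLp X 2 p := MemLp.of_bound hXm.aestronglyMeasurable (max |a| |b|)
    (ae_of_all _ fun ω => abs_le_max_abs_abs (hX ω).1 (hX ω).2)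
  rw [← integral_pi_sampleMean hK (hL2.integrable one_le_two), ← variance_eq_integral
    (Measurable.aemeasurable (by fun_prop)),
    variance_pi_sampleMean hL2]
  gcongr
  exact variance_le_sq_of_bounded (ae_of_all _ hX) hXm.aemeasurable

end SampleMean

lemma one_div_mul_sum_mem_Icc {K : ℕ} (hK : K ≠ 0) {v : Fin K → ℝ} {a b : ℝ}
    (hv : ∀ i, v i ∈ Set.Icc a b) : 1 / (K : ℝ) * ∑ i, v i ∈ Set.Icc a b := by
  have hKpos : (0 : ℝ) < K := by positivity
  have hlo : ∑ _i : Fin K, a ≤ ∑ i, v i := Finset.sum_le_sum fun i _ => (hv i).1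
  have hhi : ∑ i, v i ≤ ∑ _i : Fin K, b := Finset.sum_le_sum fun i _ => (hv i).2
  simp only [Finset.sum_const, Finset.card_univ, Fintype.card_fin, nsmul_eq_mul] at hlo hhi
  constructor
  · rw [one_div_mul_eq_div, le_div_iff₀ hKpos]; linarith
  · rw [one_div_mul_eq_div, div_le_iff₀ hKpos]; linarith

section WeightedNorm

variable {T : Type*} [Fintype T] {χ : T → ℝ}

noncomputable def weightedNorm (χ F : T → ℝ) : ℝ := √(∑ x, χ x * F x ^ 2)

lemma weightedNorm_nonneg (χ F : T → ℝ) : 0 ≤ weightedNorm χ F :=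
  sqrt_nonneg _

lemma sq_weightedNorm (hχ : ∀ x, 0 ≤ χ x) (F : T → ℝ) :
    weightedNorm χ F ^ 2 = ∑ x, χ x * F x ^ 2 :=
  sq_sqrt (Finset.sum_nonneg fun x _ => mul_nonneg (hχ x) (sq_nonneg _))

lemma weightedNorm_le_of_abs_le (hχ : ∀ x, 0 ≤ χ x) (hχ1 : ∑ x, χ x = 1) {F : T → ℝ} {D : ℝ}
    (hD : 0 ≤ D) (hF : ∀ x, |F x| ≤ D) : weightedNorm χ F ≤ D := by
  refine sqrt_le_iff.2 ⟨hD, ?_⟩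
  calc ∑ x, χ x * F x ^ 2 ≤ ∑ x, χ x * D ^ 2 :=
        Finset.sum_le_sum fun x _ => mul_le_mul_of_nonneg_left
          (sq_le_sq' (abs_le.1 (hF x)).1 (abs_le.1 (hF x)).2) (hχ x)
    _ = D ^ 2 := by rw [← Finset.sum_mul, hχ1, one_mul]

lemma weightedNorm_eq_norm (hχ : ∀ x, 0 ≤ χ x) (F : T → ℝ) :
    weightedNorm χ F = ‖(WithLp.toLp 2 fun x => √(χ x) * F x : EuclideanSpace ℝ T)‖ := by
  rw [EuclideanSpace.norm_eq, weightedNorm]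
  congr 1
  refine Finset.sum_congr rfl fun x _ => ?_
  simp [mul_pow, sq_sqrt (hχ x)]

lemma abs_weightedNorm_sub_le (hχ : ∀ x, 0 ≤ χ x) (F G : T → ℝ) :
    |weightedNorm χ F - weightedNorm χ G| ≤ weightedNorm χ (F - G) := by
  simp only [weightedNorm_eq_norm hχ, Pi.sub_apply, mul_sub]
  exact abs_norm_sub_norm_le _ _

end WeightedNorm

def HasBoundedDifferences {ι Ω : Type*} [DecidableEq ι] (F : (ι → Ω) → ℝ) (c : ℝ) : Prop :=
  ∀ gs i a, |F gs - F (Function.update gs i a)| ≤ c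

section McDiarmid

variable {Ω : Type*} [MeasurableSpace Ω] [DiscreteMeasurableSpace Ω]
  {p : Measure Ω} [IsProbabilityMeasure p]

lemma hasSubgaussianMGF_sub_integral_of_abs_sub_le {h : Ω → ℝ} {c : ℝ≥0}
    (hh : ∀ a a', |h a - h a'| ≤ c) :
    HasSubgaussianMGF (fun a => h a - ∫ a', h a' ∂p) (c ^ 2) p := by
  obtain ⟨a₀⟩ := nonempty_of_isProbabilityMeasure p
  have hIcc : ∀ a, h a ∈ Set.Icc (h a₀ - c) (h a₀ + c) := fun a => by
    have := abs_sub_le_iff.1 (hh a a₀)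
    constructor <;> linarith
  convert hasSubgaussianMGF_of_mem_Icc Measurable.of_discrete.aemeasurable (ae_of_all p hIcc)
  ext
  simp [← two_mul]

variable {B : ℝ} {c : ℝ≥0}

lemma HasBoundedDifferences.integral_cons {K : ℕ} {F : (Fin (K + 1) → Ω) → ℝ}
    (hF : HasBoundedDifferences F c) (hB : ∀ gs, |F gs| ≤ B) :
    HasBoundedDifferences (fun y => ∫ a, F (Fin.cons a y) ∂p) c := by
  intro y i a'
  rw [← integral_sub (integrable_of_abs_le fun _ => hB _) (integrable_of_abs_le fun _ => hB _)]
  exact abs_integral_le_of_abs_le fun a => by rw [Fin.cons_update]; exact hF _ _ _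

/-- McDiarmid's inequality, in sub-Gaussian form. -/
theorem HasBoundedDifferences.hasSubgaussianMGF_pi [Countable Ω] {K : ℕ}
    {F : (Fin K → Ω) → ℝ} (hB : ∀ gs, |F gs| ≤ B) (hF : HasBoundedDifferences F c) :
    HasSubgaussianMGF (fun gs => F gs - ∫ gs', F gs' ∂(Measure.pi fun _ => p))
      (K * c ^ 2) (Measure.pi fun _ => p) := by
  induction K with
  | zero =>
    have hconst : ∀ gs : Fin 0 → Ω, F gs - ∫ gs', F gs' ∂(Measure.pi fun _ => p) = 0 := by
      intro gs
      simp [Subsingleton.elim _ gs]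
    simp [hconst]
  | succ K ih =>
    set μ := Measure.pi fun _ : Fin K => p
    set G : (Fin K → Ω) → ℝ := fun y => ∫ a, F (Fin.cons a y) ∂p
    have hG : HasSubgaussianMGF (fun y => G y - ∫ y', G y' ∂μ) (K * c ^ 2) μ :=
      ih (fun y => abs_integral_le_of_abs_le fun _ => hB _) (hF.integral_cons hB)
    have hmean : ∫ y, G y ∂μ = ∫ gs, F gs ∂(Measure.pi fun _ => p) :=
      (integral_pi_fin_succ (integrable_of_abs_le hB)).symm
    rw [hmean] at hG
    set m := ∫ gs, F gs ∂(Measure.pi fun _ => p)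
    have hcond : ∀ y, HasSubgaussianMGF (fun a => F (Fin.cons a y) - G y) (c ^ 2) p := fun y =>
      hasSubgaussianMGF_sub_integral_of_abs_sub_le fun a a' => by
        simpa [Fin.update_cons_zero] using hF (Fin.cons a y) 0 a'
    have hFm : ∀ gs, |F gs - m| ≤ B + B := fun gs =>
      (abs_sub _ _).trans (add_le_add (hB gs) (abs_integral_le_of_abs_le hB))
    refine ⟨integrable_exp_mul_of_abs_le hFm, fun t => ?_⟩
    calc mgf (fun gs => F gs - m) (Measure.pi fun _ => p) t
        = ∫ y, exp (t * (G y - m)) * mgf (fun a => F (Fin.cons a y) - G y) p t ∂μ := by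
          rw [mgf, integral_pi_fin_succ (integrable_exp_mul_of_abs_le hFm t)]
          refine integral_congr_ae (ae_of_all _ fun y => ?_)
          dsimp only
          rw [mgf, ← integral_const_mul]
          congr with a
          rw [← exp_add]
          ring_nf
      _ ≤ ∫ y, exp (t * (G y - m)) * exp (c ^ 2 * t ^ 2 / 2) ∂μ :=
          integral_mono_of_nonneg (ae_of_all _ fun y => mul_nonneg (exp_nonneg _) (mgf_nonneg))
            ((hG.integrable_exp_mul t).mul_const _)
            (ae_of_all _ fun y => mul_le_mul_of_nonneg_left ((hcond y).mgf_le t) (exp_nonneg _))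
      _ = mgf (fun y => G y - m) μ t * exp (c ^ 2 * t ^ 2 / 2) := integral_mul_const _ _
      _ ≤ exp (K * c ^ 2 * t ^ 2 / 2) * exp (c ^ 2 * t ^ 2 / 2) := by
          gcongr
          exact_mod_cast hG.mgf_le t
      _ = exp (↑((K + 1 : ℕ) * c ^ 2 : ℝ≥0) * t ^ 2 / 2) := by
          rw [← exp_add]
          push_cast
          ring_nf

end McDiarmid

lemma PMF.pi_toMeasure_apply_eq_top {ι Ψ : Type*} [Fintype ι] [MeasurableSpace Ψ] (φ : PMF Ψ)
    {E : Set (ι → Ψ)} (hE : MeasurableSet E) :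
    Measure.pi (fun _ : ι => φ.toMeasure) E =
      @Measure.pi ι (fun _ => Ψ) _ (fun _ => ⊤) (fun _ => @PMF.toMeasure Ψ ⊤ φ) E := by
  have hid : @Measurable Ψ Ψ ⊤ _ id := fun s _ => trivial
  have hpi := @Measure.pi_map_pi ι _ (fun _ => Ψ) (fun _ => Ψ) (fun _ => ⊤)
    (fun _ => @PMF.toMeasure Ψ ⊤ φ) _ (fun _ => id) (fun _ => by
      rw [PMF.toMeasure_map id φ hid]; infer_instance) (fun _ => hid.aemeasurable)
  simp only [PMF.toMeasure_map id φ hid, PMF.map_id] at hpi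
  rw [← hpi, Measure.map_apply _ hE]
  · rfl
  · exact measurable_id'' (iSup_mono fun _ => MeasurableSpace.comap_mono le_top)

section RandomFeatures

variable {T Ψ : Type*} {χ : T → ℝ} {φs φ1 : PMF Ψ} {f : Ψ → T → ℝ} {D : ℝ}
  {K : ℕ}

noncomputable def weightedFeature (φs φ1 : PMF Ψ) (f : Ψ → T → ℝ) (g : Ψ) (x : T) : ℝ :=
  (φ1 g).toReal / (φs g).toReal * f g x

lemma weightedFeature_mem_Icc {C N : ℝ} (hC : ∀ g, (φ1 g).toReal / (φs g).toReal ≤ C)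
    (hf0 : ∀ g x, 0 ≤ f g x) (hfN : ∀ g x, f g x ≤ N) (g : Ψ) (x : T) :
    weightedFeature φs φ1 f g x ∈ Set.Icc 0 (C * N) := by
  have hr : 0 ≤ (φ1 g).toReal / (φs g).toReal := by positivity
  exact ⟨mul_nonneg hr (hf0 g x), mul_le_mul (hC g) (hfN g x) (hf0 g x) (hr.trans (hC g))⟩

lemma featAvg_eq_weightedFeature (gs : Fin K → Ψ) (x : T) :
    featAvg φs φ1 f gs x = 1 / (K : ℝ) * ∑ i, weightedFeature φs φ1 f (gs i) x :=
  rfl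

lemma featAvg_mem_Icc (hK : K ≠ 0) (hY : ∀ g x, weightedFeature φs φ1 f g x ∈ Set.Icc 0 D)
    (gs : Fin K → Ψ) (x : T) : featAvg φs φ1 f gs x ∈ Set.Icc 0 D :=
  one_div_mul_sum_mem_Icc hK fun i => hY (gs i) x

lemma abs_featAvg_sub_featAvg_update_le (hY : ∀ g x, weightedFeature φs φ1 f g x ∈ Set.Icc 0 D)
    (gs : Fin K → Ψ) (i : Fin K) (a : Ψ) (x : T) :
    |featAvg φs φ1 f gs x - featAvg φs φ1 f (Function.update gs i a) x| ≤ D / K := by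
  have hsum : ∑ j, (weightedFeature φs φ1 f (gs j) x -
      weightedFeature φs φ1 f (Function.update gs i a j) x) =
      weightedFeature φs φ1 f (gs i) x - weightedFeature φs φ1 f a x := by
    rw [Finset.sum_eq_single i (fun j _ hj => by simp [Function.update_of_ne hj])
      (by simp)]
    simp
  rw [featAvg_eq_weightedFeature, featAvg_eq_weightedFeature, ← mul_sub, ← Finset.sum_sub_distrib,
    hsum, abs_mul, abs_of_nonneg (by positivity), one_div_mul_eq_div]
  gcongr
  exact abs_sub_le_iff.2 ⟨by linarith [(hY (gs i) x).2, (hY a x).1],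
    by linarith [(hY (gs i) x).1, (hY a x).2]⟩

lemma deltaK_eq_weightedNorm [Fintype T] (gs : Fin K → Ψ) :
    deltaK χ φs φ1 f gs = weightedNorm χ (featAvg φs φ1 f gs - featExp φ1 f) :=
  rfl

lemma deltaK_hasBoundedDifferences [Fintype T] (hχ : ∀ x, 0 ≤ χ x) (hχ1 : ∑ x, χ x = 1) (hD : 0 ≤ D)
    (hY : ∀ g x, weightedFeature φs φ1 f g x ∈ Set.Icc 0 D) :
    HasBoundedDifferences (deltaK (K := K) χ φs φ1 f) (D / K) := by
  intro gs i a
  simp only [deltaK_eq_weightedNorm]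
  refine (abs_weightedNorm_sub_le hχ _ _).trans
    (weightedNorm_le_of_abs_le hχ hχ1 (by positivity) fun x => ?_)
  simpa using abs_featAvg_sub_featAvg_update_le hY gs i a x

variable [MeasurableSpace Ψ] [DiscreteMeasurableSpace Ψ]

lemma integrable_weightedFeature (hY : ∀ g x, weightedFeature φs φ1 f g x ∈ Set.Icc 0 D)
    (x : T) : Integrable (fun g => weightedFeature φs φ1 f g x) φs.toMeasure :=
  integrable_of_abs_le fun g => (abs_of_nonneg (hY g x).1).trans_le (hY g x).2

lemma integral_weightedFeature (hφs : ∀ g, 0 < φs g)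
    (hY : ∀ g x, weightedFeature φs φ1 f g x ∈ Set.Icc 0 D) (x : T) :
    ∫ g, weightedFeature φs φ1 f g x ∂φs.toMeasure = featExp φ1 f x := by
  rw [PMF.integral_eq_tsum _ _ (integrable_weightedFeature hY x)]
  refine tsum_congr fun g => ?_
  have : (φs g).toReal ≠ 0 := (ENNReal.toReal_pos (hφs g).ne' (PMF.apply_ne_top _ _)).ne'
  rw [weightedFeature, smul_eq_mul]
  field_simp

lemma featExp_mem_Icc (hφs : ∀ g, 0 < φs g)
    (hY : ∀ g x, weightedFeature φs φ1 f g x ∈ Set.Icc 0 D) (x : T) :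
    featExp φ1 f x ∈ Set.Icc 0 D := by
  rw [← integral_weightedFeature hφs hY]
  refine ⟨integral_nonneg fun g => (hY g x).1, ?_⟩
  simpa using integral_mono (integrable_weightedFeature hY x)
    (integrable_const (μ := φs.toMeasure) D) fun g => (hY g x).2

lemma abs_featAvg_sub_featExp_le (hK : K ≠ 0) (hφs : ∀ g, 0 < φs g)
    (hY : ∀ g x, weightedFeature φs φ1 f g x ∈ Set.Icc 0 D) (gs : Fin K → Ψ) (x : T) :
    |featAvg φs φ1 f gs x - featExp φ1 f x| ≤ D := by
  have h1 := featAvg_mem_Icc hK hY gs x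
  have h2 := featExp_mem_Icc hφs hY x
  exact abs_sub_le_iff.2 ⟨by linarith [h1.2, h2.1], by linarith [h1.1, h2.2]⟩

variable [Fintype T]

lemma abs_deltaK_le (hχ : ∀ x, 0 ≤ χ x) (hχ1 : ∑ x, χ x = 1) (hD : 0 ≤ D) (hK : K ≠ 0)
    (hφs : ∀ g, 0 < φs g) (hY : ∀ g x, weightedFeature φs φ1 f g x ∈ Set.Icc 0 D)
    (gs : Fin K → Ψ) : |deltaK χ φs φ1 f gs| ≤ D := by
  rw [deltaK_eq_weightedNorm, abs_of_nonneg (weightedNorm_nonneg _ _)]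
  refine weightedNorm_le_of_abs_le hχ hχ1 hD fun x => ?_
  exact abs_featAvg_sub_featExp_le hK hφs hY gs x

variable [Countable Ψ]

lemma sq_integral_deltaK_le (hχ : ∀ x, 0 ≤ χ x) (hχ1 : ∑ x, χ x = 1) (hD : 0 ≤ D) (hK : K ≠ 0)
    (hφs : ∀ g, 0 < φs g) (hY : ∀ g x, weightedFeature φs φ1 f g x ∈ Set.Icc 0 D) :
    (∫ gs, deltaK χ φs φ1 f gs ∂(Measure.pi fun _ : Fin K => φs.toMeasure)) ^ 2
      ≤ D ^ 2 / (4 * K) := by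
  have hsq : ∀ gs x, |(featAvg φs φ1 f gs x - featExp φ1 f x) ^ 2| ≤ D ^ 2 := fun gs x => by
    have h := abs_le.1 (abs_featAvg_sub_featExp_le hK hφs hY gs x)
    rw [abs_of_nonneg (sq_nonneg _)]
    exact sq_le_sq' h.1 h.2
  have hmean : ∀ x, ∫ gs, (featAvg φs φ1 f gs x - featExp φ1 f x) ^ 2
      ∂(Measure.pi fun _ : Fin K => φs.toMeasure) ≤ (D / 2) ^ 2 / K := fun x => by
    have := integral_sq_sampleMean_sub_le (p := φs.toMeasure) hK
      (X := fun g => weightedFeature φs φ1 f g x) Measurable.of_discrete (fun g => hY g x)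
    rwa [integral_weightedFeature hφs hY, sub_zero] at this
  calc (∫ gs, deltaK χ φs φ1 f gs ∂(Measure.pi fun _ : Fin K => φs.toMeasure)) ^ 2
      ≤ ∫ gs, deltaK χ φs φ1 f gs ^ 2 ∂(Measure.pi fun _ : Fin K => φs.toMeasure) :=
        sq_integral_le_integral_sq (MemLp.of_bound Measurable.of_discrete.aestronglyMeasurable D
          (ae_of_all _ (abs_deltaK_le hχ hχ1 hD hK hφs hY)))
    _ = ∑ x, χ x * ∫ gs, (featAvg φs φ1 f gs x - featExp φ1 f x) ^ 2
          ∂(Measure.pi fun _ : Fin K => φs.toMeasure) := by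
        simp_rw [deltaK_eq_weightedNorm, sq_weightedNorm hχ, ← integral_const_mul]
        exact integral_finsetSum _ fun x _ =>
          (integrable_of_abs_le (hsq · x)).const_mul (χ x)
    _ ≤ ∑ x, χ x * ((D / 2) ^ 2 / K) :=
        Finset.sum_le_sum fun x _ => mul_le_mul_of_nonneg_left (hmean x) (hχ x)
    _ = D ^ 2 / (4 * K) := by
        rw [← Finset.sum_mul, hχ1]
        ring

lemma measureReal_le_deltaK_sub_integral_le (hχ : ∀ x, 0 ≤ χ x) (hχ1 : ∑ x, χ x = 1)
    (hD : 0 ≤ D) (hK : K ≠ 0) (hφs : ∀ g, 0 < φs g)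
    (hY : ∀ g x, weightedFeature φs φ1 f g x ∈ Set.Icc 0 D) {ε : ℝ} (hε : 0 ≤ ε) :
    (Measure.pi fun _ : Fin K => φs.toMeasure).real
      {gs | ε ≤ deltaK χ φs φ1 f gs -
        ∫ gs', deltaK χ φs φ1 f gs' ∂(Measure.pi fun _ : Fin K => φs.toMeasure)}
      ≤ exp (-(K * ε ^ 2) / (2 * D ^ 2)) := by
  let c : ℝ≥0 := ⟨D / K, by positivity⟩
  have h := (deltaK_hasBoundedDifferences hχ hχ1 hD hY).hasSubgaussianMGF_pi
    (p := φs.toMeasure) (c := c) (abs_deltaK_le hχ hχ1 hD hK hφs hY)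
  refine (h.measure_ge_le hε).trans_eq ?_
  have hc : ((K * c ^ 2 : ℝ≥0) : ℝ) = D ^ 2 / K := by
    have : (c : ℝ) = D / K := rfl
    push_cast [this]
    field_simp
  rw [hc, mul_div_assoc', div_div_eq_mul_div]
  ring_nf

theorem ofReal_one_sub_le_measure_deltaK_le (hχ : ∀ x, 0 ≤ χ x) (hχ1 : ∑ x, χ x = 1)
    (hφs : ∀ g, 0 < φs g) (hD : 0 < D) (hY : ∀ g x, weightedFeature φs φ1 f g x ∈ Set.Icc 0 D)
    {ε δ : ℝ} (hε : 0 < ε) (hδ : δ ∈ Set.Ioo (0 : ℝ) 1)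
    (hK : max (2 * log (1 / δ)) 1 * D ^ 2 / ε ^ 2 ≤ (K : ℝ)) :
    ENNReal.ofReal (1 - δ) ≤
      (Measure.pi fun _ : Fin K => φs.toMeasure) {gs | deltaK χ φs φ1 f gs ≤ 2 * ε} := by
  set μ := Measure.pi fun _ : Fin K => φs.toMeasure
  have hKε : D ^ 2 ≤ K * ε ^ 2 := by
    rw [← div_le_iff₀ (by positivity)]
    exact (le_mul_of_one_le_left (by positivity) (le_max_right _ _)).trans
      ((mul_div_assoc _ _ _).symm.le.trans hK)
  have hKpos : (0 : ℝ) < K := by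
    by_contra h
    nlinarith [sq_pos_of_pos hD, sq_nonneg ε, Nat.cast_nonneg (α := ℝ) K]
  have hK0 : K ≠ 0 := by exact_mod_cast hKpos.ne'
  set m := ∫ gs, deltaK χ φs φ1 f gs ∂μ
  have hm : m ≤ ε := by
    have h := sq_integral_deltaK_le hχ hχ1 hD.le hK0 hφs hY
    have : D ^ 2 / (4 * K) ≤ ε ^ 2 := by
      rw [div_le_iff₀ (by positivity)]
      nlinarith
    nlinarith
  have htail : μ.real {gs | ε ≤ deltaK χ φs φ1 f gs - m} ≤ δ := by
    refine (measureReal_le_deltaK_sub_integral_le hχ hχ1 hD.le hK0 hφs hY hε.le).trans ?_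
    have hlog : 2 * log (1 / δ) * D ^ 2 / ε ^ 2 ≤ K :=
      le_trans (by gcongr; exact le_max_left _ _) hK
    rw [div_le_iff₀ (by positivity), one_div, log_inv] at hlog
    rw [← le_log_iff_exp_le hδ.1, div_le_iff₀ (by positivity)]
    linarith
  have hbad : {gs : Fin K → Ψ | deltaK χ φs φ1 f gs ≤ 2 * ε}ᶜ ⊆
      {gs | ε ≤ deltaK χ φs φ1 f gs - m} := fun gs hgs => by
    have : 2 * ε < deltaK χ φs φ1 f gs := not_le.1 hgs
    show ε ≤ deltaK χ φs φ1 f gs - m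
    linarith
  refine ENNReal.ofReal_le_of_le_toReal ?_
  have hgood := probReal_compl_eq_one_sub (μ := μ)
    (MeasurableSet.of_discrete (s := {gs | deltaK χ φs φ1 f gs ≤ 2 * ε}ᶜ))
  rw [compl_compl] at hgood
  rw [← measureReal_def, hgood]
  linarith [measureReal_mono (μ := μ) hbad (measure_ne_top _ _)]

end RandomFeatures

theorem stmt_0 {T Ψ : Type*} [Fintype T] [Countable Ψ] [MeasurableSpace Ψ]
    (χ : T → ℝ) (hχ0 : ∀ x, 0 ≤ χ x) (hχ1 : ∑ x, χ x = 1)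
    (φs φ1 : PMF Ψ) (hφs : ∀ g, 0 < φs g)
    (f : Ψ → T → ℝ) (N : ℝ) (hN : 0 < N)
    (hf0 : ∀ g x, 0 ≤ f g x) (hfN : ∀ g x, f g x ≤ N)
    (hBdd : BddAbove (Set.range fun g => (φ1 g).toReal / (φs g).toReal))
    (C : ℝ) (hC : C = ⨆ g, (φ1 g).toReal / (φs g).toReal)
    (K : ℕ) (ε δ : ℝ) (hε : 0 < ε) (hδ : δ ∈ Set.Ioo (0 : ℝ) 1)
    (hK : max (2 * Real.log (1 / δ)) 1 * C ^ 2 * N ^ 2 / ε ^ 2 ≤ (K : ℝ)) :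
    ENNReal.ofReal (1 - δ) ≤
      (Measure.pi fun _ : Fin K => φs.toMeasure)
        {gs | deltaK χ φs φ1 f gs ≤ 2 * ε} := by
  have hratio : ∀ g, (φ1 g).toReal / (φs g).toReal ≤ C := fun g => hC ▸ le_ciSup hBdd g
  obtain ⟨g₁, hg₁⟩ := φ1.support_nonempty
  have hC0 : 0 < C := lt_of_lt_of_le (div_pos (ENNReal.toReal_pos hg₁ (PMF.apply_ne_top _ _))
    (ENNReal.toReal_pos (hφs g₁).ne' (PMF.apply_ne_top _ _))) (hratio g₁)
  set good := {gs : Fin K → Ψ | deltaK χ φs φ1 f gs ≤ 2 * ε}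
  have hcore : ENNReal.ofReal (1 - δ) ≤
      @Measure.pi (Fin K) (fun _ => Ψ) _ (fun _ => ⊤) (fun _ => @PMF.toMeasure Ψ ⊤ φs) good := by
    let _ : MeasurableSpace Ψ := ⊤
    refine ofReal_one_sub_le_measure_deltaK_le hχ0 hχ1 hφs (mul_pos hC0 hN)
      (weightedFeature_mem_Icc hratio hf0 hfN) hε hδ ?_
    rwa [mul_pow, ← mul_assoc]
  calc ENNReal.ofReal (1 - δ) ≤ _ := hcore.trans (measure_mono (subset_toMeasurable _ good))
    _ = _ := (PMF.pi_toMeasure_apply_eq_top φs (measurableSet_toMeasurable _ good)).symm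
    _ = _ := measure_toMeasurable good
end

section
/- In the random-feature setting, the expectation of Δ_K over an i.i.d. sample (g_1,…,g_K) drawn from φ* satisfies E[Δ_K(g_1,…,g_K)] ≤ C·N/√K. -/
open MeasureTheory

/-! With `h_x g = φ1(g) / φ*(g) · f_g(x)`, the approximation `f2(x)` is the empirical mean of
`h_x` over an i.i.d. sample from `φ*`, and `f1(x)` is its `φ*`-expectation (importance weighting).
Hence `E[(f2(x) - f1(x))²] = Var[h_x] / K ≤ (C N)² / K`, as `0 ≤ h_x ≤ C N`. Averaging over `χ`
and Jensen's inequality for the square root give `E[Δ_K] ≤ √(E[Δ_K²]) ≤ C N / √K`. -/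

open ProbabilityTheory

section Probability

variable {Ω : Type*} [MeasurableSpace Ω] {μ : Measure Ω} [IsProbabilityMeasure μ]

lemma integral_sqrt_le_sqrt_integral {Y : Ω → ℝ} (hY0 : ∀ ω, 0 ≤ Y ω) (hY : Integrable Y μ) :
    ∫ ω, √(Y ω) ∂μ ≤ √(∫ ω, Y ω ∂μ) := by
  have hsq : (fun ω => √(Y ω) ^ 2) = Y := funext fun ω => Real.sq_sqrt (hY0 ω)
  have hL2 : MemLp (fun ω => √(Y ω)) 2 μ := by
    rw [memLp_two_iff_integrable_sq hY.aemeasurable.sqrt.aestronglyMeasurable, hsq]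
    exact hY
  have hvar := variance_eq_sub hL2 ▸ variance_nonneg _ μ
  simp only [Pi.pow_apply, hsq] at hvar
  exact (le_abs_self _).trans (Real.abs_le_sqrt (by linarith))

lemma memLp_sampleMean {h : Ω → ℝ} (hh : MemLp h 2 μ) (K : ℕ) :
    MemLp (fun gs : Fin K → Ω => (1 / K : ℝ) * ∑ i, h (gs i)) 2 (Measure.pi fun _ => μ) :=
  (memLp_finsetSum _ fun i _ =>
    hh.comp_measurePreserving (measurePreserving_eval _ i)).const_mul _

lemma integral_sampleMean {h : Ω → ℝ} (hh : Integrable h μ) {K : ℕ} (hK : 0 < K) :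
    ∫ gs : Fin K → Ω, (1 / K : ℝ) * ∑ i, h (gs i) ∂(Measure.pi fun _ => μ) = ∫ ω, h ω ∂μ := by
  rw [integral_const_mul, integral_finsetSum _ fun i _ => integrable_comp_eval hh]
  simp only [integral_comp_eval (μ := fun _ : Fin K => μ) hh.aestronglyMeasurable,
    Finset.sum_const, Finset.card_univ, Fintype.card_fin, nsmul_eq_mul]
  field_simp

lemma variance_sampleMean {h : Ω → ℝ} (hh : MemLp h 2 μ) (K : ℕ) :
    Var[fun gs : Fin K → Ω => (1 / K : ℝ) * ∑ i, h (gs i); Measure.pi fun _ => μ]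
      = Var[h; μ] / K := by
  have hsum := variance_sum_pi (μ := fun _ : Fin K => μ) (X := fun _ => h) (fun _ => hh)
  simp only [Finset.sum_const, Finset.card_univ, Fintype.card_fin, nsmul_eq_mul] at hsum
  rw [variance_const_mul, ← Finset.sum_fn, hsum]
  field_simp

lemma integral_sq_sampleMean_sub_integral {h : Ω → ℝ} (hh : MemLp h 2 μ) {K : ℕ} (hK : 0 < K) :
    ∫ gs : Fin K → Ω, ((1 / K : ℝ) * ∑ i, h (gs i) - ∫ ω, h ω ∂μ) ^ 2 ∂(Measure.pi fun _ => μ)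
      = Var[h; μ] / K := by
  rw [← variance_sampleMean hh, variance_eq_integral (memLp_sampleMean hh K).aemeasurable,
    integral_sampleMean (hh.integrable one_le_two) hK]

end Probability

lemma PMF.integral_div_mul_eq_tsum {Ψ : Type*} [MeasurableSpace Ψ] [MeasurableSingletonClass Ψ]
    {p q : PMF Ψ} (hp : ∀ g, p g ≠ 0) {u : Ψ → ℝ}
    (hu : Integrable (fun g => (q g).toReal / (p g).toReal * u g) p.toMeasure) :
    ∫ g, (q g).toReal / (p g).toReal * u g ∂p.toMeasure = ∑' g, (q g).toReal * u g := by
  rw [PMF.integral_eq_tsum _ _ hu]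
  refine tsum_congr fun g => ?_
  have hpg : (p g).toReal ≠ 0 := ENNReal.toReal_ne_zero.2 ⟨hp g, p.apply_ne_top g⟩
  rw [smul_eq_mul]
  field_simp

lemma PMF.integral_pi_toMeasure_eq_top {Ψ ι : Type*} [Fintype ι] [MeasurableSpace Ψ] (p : PMF Ψ)
    {F : (ι → Ψ) → ℝ} (hF : AEStronglyMeasurable F (Measure.pi fun _ => p.toMeasure)) :
    ∫ gs, F gs ∂(Measure.pi fun _ => p.toMeasure) =
      ∫ gs, F gs ∂(@Measure.pi ι (fun _ => Ψ) _ (fun _ => ⊤) fun _ => @PMF.toMeasure Ψ ⊤ p) := by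
  have hid : @Measurable Ψ Ψ ⊤ _ id := fun _ _ => MeasurableSpace.measurableSet_top
  have hmap : @Measure.map Ψ Ψ ⊤ _ id (@PMF.toMeasure Ψ ⊤ p) = p.toMeasure := by
    rw [PMF.toMeasure_map (mα := ⊤) id p hid, PMF.map_id]
  have hpi := @Measure.pi_map_pi ι _ (fun _ => Ψ) (fun _ => Ψ) (fun _ => ⊤)
    (fun _ => @PMF.toMeasure Ψ ⊤ p) _ (fun _ => id) (by simp only [hmap]; infer_instance)
    (fun _ => hid.aemeasurable)
  simp only [hmap] at hpi
  have hidpi : @Measurable (ι → Ψ) (ι → Ψ) (@MeasurableSpace.pi ι (fun _ => Ψ) fun _ => ⊤) _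
      (fun x i => id (x i)) :=
    @measurable_pi_lambda _ _ _ (MeasurableSpace.pi (m := fun _ => ⊤)) _ _ fun i =>
      hid.comp (@measurable_pi_apply ι (fun _ => Ψ) (fun _ => ⊤) i)
  rw [← hpi, integral_map hidpi.aemeasurable (by rwa [hpi])]
  rfl

section RandomFeatures

variable {T Ψ : Type*} {mΨ : MeasurableSpace Ψ} (φs φ1 : PMF Ψ) (f : Ψ → T → ℝ)

noncomputable def weightedFeat (x : T) (g : Ψ) : ℝ := (φ1 g).toReal / (φs g).toReal * f g x

lemma featAvg_eq_sampleMean {K : ℕ} (gs : Fin K → Ψ) (x : T) :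
    featAvg φs φ1 f gs x = (1 / K : ℝ) * ∑ i, weightedFeat φs φ1 f x (gs i) := rfl

variable {φs φ1 f}

lemma abs_weightedFeat_le {N C : ℝ} (hf0 : ∀ g x, 0 ≤ f g x) (hfN : ∀ g x, f g x ≤ N)
    (hC : ∀ g, (φ1 g).toReal / (φs g).toReal ≤ C) (x : T) (g : Ψ) :
    |weightedFeat φs φ1 f x g| ≤ C * N := by
  have hr : 0 ≤ (φ1 g).toReal / (φs g).toReal := by positivity
  rw [weightedFeat, abs_of_nonneg (mul_nonneg hr (hf0 g x))]
  exact mul_le_mul (hC g) (hfN g x) (hf0 g x) (hr.trans (hC g))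

variable [DiscreteMeasurableSpace Ψ]

lemma memLp_weightedFeat {x : T} {B : ℝ} (hB : ∀ g, |weightedFeat φs φ1 f x g| ≤ B) :
    MemLp (weightedFeat φs φ1 f x) 2 φs.toMeasure :=
  MemLp.of_bound Measurable.of_discrete.aestronglyMeasurable B (ae_of_all _ hB)

lemma featExp_eq_integral_weightedFeat (hφs : ∀ g, 0 < φs g) {x : T}
    (hx : Integrable (weightedFeat φs φ1 f x) φs.toMeasure) :
    featExp φ1 f x = ∫ g, weightedFeat φs φ1 f x g ∂φs.toMeasure :=
  (PMF.integral_div_mul_eq_tsum (fun g => (hφs g).ne') hx).symm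

lemma integral_sq_featAvg_sub_featExp_le (hφs : ∀ g, 0 < φs g) {x : T} {B : ℝ}
    (hB : ∀ g, |weightedFeat φs φ1 f x g| ≤ B) {K : ℕ} (hK : 0 < K) :
    ∫ gs, (featAvg φs φ1 f gs x - featExp φ1 f x) ^ 2 ∂(Measure.pi fun _ : Fin K => φs.toMeasure)
      ≤ B ^ 2 / K := by
  have hL2 := memLp_weightedFeat hB
  have hsq : ∫ g, weightedFeat φs φ1 f x g ^ 2 ∂φs.toMeasure ≤ B ^ 2 :=
    (integral_mono hL2.integrable_sq (integrable_const _) fun g =>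
      sq_le_sq' (abs_le.1 (hB g)).1 (abs_le.1 (hB g)).2).trans_eq (by simp)
  simp only [featAvg_eq_sampleMean,
    featExp_eq_integral_weightedFeat hφs (hL2.integrable one_le_two)]
  rw [integral_sq_sampleMean_sub_integral hL2 hK]
  gcongr
  exact (variance_le_expectation_sq hL2.aestronglyMeasurable).trans hsq

theorem integral_deltaK_le_of_discrete [Fintype T] (χ : T → ℝ) (hχ0 : ∀ x, 0 ≤ χ x)
    (hχ1 : ∑ x, χ x = 1) (hφs : ∀ g, 0 < φs g) {B : ℝ} (hB0 : 0 ≤ B)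
    (hB : ∀ x g, |weightedFeat φs φ1 f x g| ≤ B)
    {K : ℕ} (hK : 0 < K) :
    ∫ gs, deltaK χ φs φ1 f gs ∂(Measure.pi fun _ : Fin K => φs.toMeasure) ≤ B / √K := by
  set μK := Measure.pi fun _ : Fin K => φs.toMeasure
  have hL2 (x : T) : MemLp (fun gs => featAvg φs φ1 f gs x - featExp φ1 f x) 2 μK :=
    (memLp_sampleMean (memLp_weightedFeat (hB x)) K).sub (memLp_const _)
  have hint (x : T) :
      Integrable (fun gs => χ x * (featAvg φs φ1 f gs x - featExp φ1 f x) ^ 2) μK :=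
    (hL2 x).integrable_sq.const_mul _
  calc ∫ gs, deltaK χ φs φ1 f gs ∂μK
      ≤ √(∫ gs, ∑ x, χ x * (featAvg φs φ1 f gs x - featExp φ1 f x) ^ 2 ∂μK) :=
        integral_sqrt_le_sqrt_integral
          (fun gs => Finset.sum_nonneg fun x _ => mul_nonneg (hχ0 x) (sq_nonneg _))
          (integrable_finsetSum _ fun x _ => hint x)
    _ = √(∑ x, χ x * ∫ gs, (featAvg φs φ1 f gs x - featExp φ1 f x) ^ 2 ∂μK) := by
        simp only [integral_finsetSum _ fun x _ => hint x, integral_const_mul]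
    _ ≤ √(∑ x, χ x * (B ^ 2 / K)) := by
        gcongr with x
        · exact hχ0 x
        · exact integral_sq_featAvg_sub_featExp_le hφs (hB x) hK
    _ = B / √K := by
        rw [← Finset.sum_mul, hχ1, one_mul, Real.sqrt_div' _ (Nat.cast_nonneg K), Real.sqrt_sq hB0]

end RandomFeatures

theorem stmt_1_general {T Ψ : Type*} [Fintype T] [MeasurableSpace Ψ]
    (χ : T → ℝ) (hχ0 : ∀ x, 0 ≤ χ x) (hχ1 : ∑ x, χ x = 1)
    (φs φ1 : PMF Ψ) (hφs : ∀ g, 0 < φs g)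
    (f : Ψ → T → ℝ) (N : ℝ) (hN : 0 < N)
    (hf0 : ∀ g x, 0 ≤ f g x) (hfN : ∀ g x, f g x ≤ N)
    (hBdd : BddAbove (Set.range fun g => (φ1 g).toReal / (φs g).toReal))
    (C : ℝ) (hC : C = ⨆ g, (φ1 g).toReal / (φs g).toReal)
    (K : ℕ) (hKpos : 0 < K) :
    ∫ gs, deltaK χ φs φ1 f gs ∂(Measure.pi fun _ : Fin K => φs.toMeasure)
      ≤ C * N / Real.sqrt K := by
  have hC0 : 0 ≤ C := hC ▸ Real.iSup_nonneg fun g => by positivity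
  have hratio (g : Ψ) : (φ1 g).toReal / (φs g).toReal ≤ C := hC ▸ le_ciSup hBdd g
  -- The σ-algebra on `Ψ` is arbitrary: unless `Δ_K` is integrable its integral is the junk
  -- value `0`, and if it is, the integral may be computed for the discrete σ-algebra.
  by_cases hΔ : Integrable (deltaK χ φs φ1 f) (Measure.pi fun _ : Fin K => φs.toMeasure)
  · rw [PMF.integral_pi_toMeasure_eq_top φs hΔ.aestronglyMeasurable]
    exact integral_deltaK_le_of_discrete (mΨ := ⊤) χ hχ0 hχ1 hφs (mul_nonneg hC0 hN.le)
      (abs_weightedFeat_le hf0 hfN hratio) hKpos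
  · rw [integral_undef hΔ]
    positivity

theorem stmt_1 {T Ψ : Type*} [Fintype T] [Countable Ψ] [MeasurableSpace Ψ]
    (χ : T → ℝ) (hχ0 : ∀ x, 0 ≤ χ x) (hχ1 : ∑ x, χ x = 1)
    (φs φ1 : PMF Ψ) (hφs : ∀ g, 0 < φs g)
    (f : Ψ → T → ℝ) (N : ℝ) (hN : 0 < N)
    (hf0 : ∀ g x, 0 ≤ f g x) (hfN : ∀ g x, f g x ≤ N)
    (hBdd : BddAbove (Set.range fun g => (φ1 g).toReal / (φs g).toReal))
    (C : ℝ) (hC : C = ⨆ g, (φ1 g).toReal / (φs g).toReal)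
    (K : ℕ) (hKpos : 0 < K) :
    ∫ gs, deltaK χ φs φ1 f gs ∂(Measure.pi fun _ : Fin K => φs.toMeasure)
      ≤ C * N / Real.sqrt K :=
  stmt_1_general χ hχ0 hχ1 φs φ1 hφs f N hN hf0 hfN hBdd C hC K hKpos
end

section
/- Let V be a finite type and f : Finset V → ℝ submodular. Then for all X, S ⊆ V: f(S) ≤ f(X) − Σ_{v∈X\S} (f(X) − f(X \ {v})) + Σ_{v∈S\X} (f((X ∩ S) ∪ {v}) − f(X ∩ S)), and this upper bound equals f(X) when S = X. -/
/-- A set function `f : Finset V → ℝ` is submodular if adding an element to a smaller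
set gains at least as much as adding it to a larger set:
`f(A ∪ {v}) − f(A) ≥ f(B ∪ {v}) − f(B)` for all `A ⊆ B` and `v ∉ B`. -/
def Submodular {V : Type*} [DecidableEq V] (f : Finset V → ℝ) : Prop :=
  ∀ ⦃A B : Finset V⦄, A ⊆ B → ∀ v ∉ B,
    f (insert v B) - f B ≤ f (insert v A) - f A

/-- The upper bound
`f(X) − Σ_{v∈X\S} (f(X) − f(X \ {v})) + Σ_{v∈S\X} (f((X ∩ S) ∪ {v}) − f(X ∩ S))`. -/
noncomputable def submodUB {V : Type*} [DecidableEq V] (f : Finset V → ℝ)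
    (X S : Finset V) : ℝ :=
  f X - ∑ v ∈ X \ S, (f X - f (X.erase v))
      + ∑ v ∈ S \ X, (f (insert v (X ∩ S)) - f (X ∩ S))

/-!
Going from `X` down to `X ∩ S`, removing the elements of `X \ S` one at a time, each removal
costs at least its marginal value at the full set `X`; going from `X ∩ S` up to `S`, adding the
elements of `S \ X` one at a time, each addition gains at most its marginal value at the base
`X ∩ S`. Both are diminishing returns applied along a chain of sets, and
`f S - f X` telescopes along the two chains.
-/

namespace Submodular

variable {V : Type*} [DecidableEq V] {f : Finset V → ℝ}

theorem le_sub_sum_erase (hf : Submodular f) {X A : Finset V} (hAX : A ⊆ X) :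
    f (X \ A) ≤ f X - ∑ v ∈ A, (f X - f (X.erase v)) := by
  induction A using Finset.induction_on with
  | empty => simp
  | @insert a A ha ih =>
    have haX : a ∈ X := hAX (Finset.mem_insert_self a A)
    have marginal := hf (Finset.erase_subset_erase a (Finset.sdiff_subset (t := A)))
      a (Finset.notMem_erase a X)
    rw [Finset.insert_erase haX,
      Finset.insert_erase (Finset.mem_sdiff.mpr ⟨haX, ha⟩)] at marginal
    rw [Finset.sum_insert ha, Finset.sdiff_insert]
    linarith [ih (Finset.insert_subset_iff.mp hAX).2]

theorem le_add_sum_insert (hf : Submodular f) {T B : Finset V} (hTB : Disjoint T B) :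
    f (T ∪ B) ≤ f T + ∑ v ∈ B, (f (insert v T) - f T) := by
  induction B using Finset.induction_on with
  | empty => simp
  | @insert b B hb ih =>
    have hbT : b ∉ T := Finset.disjoint_right.mp hTB (Finset.mem_insert_self b B)
    have marginal := hf (Finset.subset_union_left (s₁ := T) (s₂ := B)) b (by simp [hbT, hb])
    rw [Finset.sum_insert hb, Finset.union_insert]
    linarith [ih (hTB.mono_right (Finset.subset_insert b B))]

theorem le_submodUB (hf : Submodular f) (X S : Finset V) : f S ≤ submodUB f X S := by
  have down := hf.le_sub_sum_erase (Finset.sdiff_subset (s := X) (t := S))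
  rw [sdiff_sdiff_right_self, Finset.inf_eq_inter] at down
  have up := hf.le_add_sum_insert (Finset.disjoint_sdiff_inter S X).symm
  rw [Finset.union_comm, Finset.sdiff_union_inter, Finset.inter_comm] at up
  unfold submodUB
  linarith

end Submodular

theorem submodUB_self {V : Type*} [DecidableEq V] (f : Finset V → ℝ) (X : Finset V) :
    submodUB f X X = f X := by
  simp [submodUB]

theorem stmt_7_general {V : Type*} [DecidableEq V]
    (f : Finset V → ℝ) (hf : Submodular f) :
    (∀ X S : Finset V, f S ≤ submodUB f X S) ∧
    (∀ X : Finset V, submodUB f X X = f X) :=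
  ⟨hf.le_submodUB, submodUB_self f⟩

theorem stmt_7 {V : Type*} [Fintype V] [DecidableEq V]
    (f : Finset V → ℝ) (hf : Submodular f) :
    (∀ X S : Finset V, f S ≤ submodUB f X S) ∧
    (∀ X : Finset V, submodUB f X X = f X) :=
  stmt_7_general f hf
end

section
/- Let V be a finite type with |V| = n, let f : Finset V → ℝ be submodular with f(∅) = 0, and let σ : Fin n ≃ V be a bijection (a linear order on V). For 0 ≤ i ≤ n let S_i := {σ(0),…,σ(i−1)} be the i-th prefix (S_0 = ∅), and define Δ_σ(σ(i)) := f(S_{i+1}) − f(S_i). Then the modular function h_σ(S) := Σ_{v∈S} Δ_σ(v) satisfies h_σ(S) ≤ f(S) for every S ⊆ V, and h_σ(S_i) = f(S_i) for every prefix S_i. In particular, for each X ⊆ V there is a modular lower bound of f that is tight at X (take any σ whose first |X| elements are X). -/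
def prefixSet {V : Type*} [DecidableEq V] {n : ℕ} (σ : Fin n ≃ V) (i : ℕ) : Finset V :=
  (Finset.univ.filter fun j : Fin n => (j : ℕ) < i).image σ

noncomputable def prefixGain {V : Type*} [DecidableEq V] {n : ℕ} (σ : Fin n ≃ V)
    (f : Finset V → ℝ) (v : V) : ℝ :=
  f (prefixSet σ ((σ.symm v : ℕ) + 1)) - f (prefixSet σ (σ.symm v : ℕ))

noncomputable def modularLB {V : Type*} [DecidableEq V] {n : ℕ} (σ : Fin n ≃ V)
    (f : Finset V → ℝ) (S : Finset V) : ℝ :=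
  ∑ v ∈ S, prefixGain σ f v

open Finset

section PrefixSet

variable {V : Type*} [DecidableEq V] {n : ℕ} (σ : Fin n ≃ V)

theorem mem_prefixSet {i : ℕ} {v : V} : v ∈ prefixSet σ i ↔ (σ.symm v : ℕ) < i := by
  simp only [prefixSet, mem_image, mem_filter, mem_univ, true_and]
  exact ⟨by rintro ⟨j, hj, rfl⟩; simpa using hj, fun h => ⟨σ.symm v, h, σ.apply_symm_apply v⟩⟩

theorem prefixSet_zero : prefixSet σ 0 = ∅ := by
  ext v
  simp [mem_prefixSet]

theorem prefixSet_of_le [Fintype V] {i : ℕ} (hi : n ≤ i) : prefixSet σ i = univ := by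
  ext v
  simpa [mem_prefixSet] using (σ.symm v).is_lt.trans_le hi

theorem prefixSet_succ (i : Fin n) : prefixSet σ (i + 1) = insert (σ i) (prefixSet σ i) := by
  ext v
  rw [mem_insert, mem_prefixSet, mem_prefixSet, Nat.lt_succ_iff_lt_or_eq, or_comm,
    ← Fin.ext_iff, Equiv.symm_apply_eq]

theorem apply_notMem_prefixSet (i : Fin n) : σ i ∉ prefixSet σ i := by
  simp [mem_prefixSet]

theorem prefixSet_eq_of_forall_mem_iff {X : Finset V} {k : ℕ}
    (hX : ∀ j, σ j ∈ X ↔ (j : ℕ) < k) : prefixSet σ k = X := by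
  ext v
  rw [mem_prefixSet, ← hX, σ.apply_symm_apply]

theorem prefixGain_apply (f : Finset V → ℝ) (i : Fin n) :
    prefixGain σ f (σ i) = f (insert (σ i) (prefixSet σ i)) - f (prefixSet σ i) := by
  rw [prefixGain, σ.symm_apply_apply, prefixSet_succ]

end PrefixSet

theorem Finset.exists_equiv_fin_apply_mem_iff {V : Type*} [Fintype V] [DecidableEq V]
    (X : Finset V) : ∃ σ : Fin (Fintype.card V) ≃ V, ∀ j, σ j ∈ X ↔ (j : ℕ) < X.card := by
  let l := X.toList ++ Xᶜ.toList
  have hnodup : l.Nodup :=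
    (nodup_toList X).append (nodup_toList Xᶜ) fun _ hX hXc => by simp_all
  have hmem : ∀ v, v ∈ l := fun v => by by_cases v ∈ X <;> simp_all [l]
  have hlen : l.length = Fintype.card V := by simp [l, card_add_card_compl]
  refine ⟨(finCongr hlen.symm).trans (hnodup.getEquivOfForallMemList l hmem), fun j => ?_⟩
  simp only [Equiv.trans_apply, finCongr_apply, List.Nodup.getEquivOfForallMemList_apply,
    List.get_eq_getElem, Fin.val_cast, l, List.getElem_append, length_toList]
  split_ifs with h
  · exact iff_of_true (mem_toList.mp (List.getElem_mem _)) h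
  · exact iff_of_false (mem_compl.mp (mem_toList.mp (List.getElem_mem _))) h

section ModularLB

variable {V : Type*} [DecidableEq V] {n : ℕ} (σ : Fin n ≃ V) {f : Finset V → ℝ}

theorem modularLB_prefixSet (hf0 : f ∅ = 0) {i : ℕ} (hi : i ≤ n) :
    modularLB σ f (prefixSet σ i) = f (prefixSet σ i) := by
  induction i with
  | zero => simp [modularLB, prefixSet_zero, hf0]
  | succ i ih =>
    have ih := ih (Nat.le_of_succ_le hi)
    rw [modularLB] at ih ⊢
    rw [prefixSet_succ σ ⟨i, hi⟩, sum_insert (apply_notMem_prefixSet σ _), ih,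
      prefixGain_apply]
    ring

theorem modularLB_inter_prefixSet_le (hf : Submodular f) (hf0 : f ∅ = 0) (S : Finset V)
    {i : ℕ} (hi : i ≤ n) : modularLB σ f (S ∩ prefixSet σ i) ≤ f (S ∩ prefixSet σ i) := by
  induction i with
  | zero => simp [modularLB, prefixSet_zero, hf0]
  | succ i ih =>
    have ih := ih (Nat.le_of_succ_le hi)
    let v := σ ⟨i, hi⟩
    have hv : v ∉ prefixSet σ i := apply_notMem_prefixSet σ _
    rw [prefixSet_succ σ ⟨i, hi⟩]
    by_cases hvS : v ∈ S
    · rw [inter_insert_of_mem hvS, modularLB,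
        sum_insert fun h => hv (mem_of_mem_inter_right h)]
      have hgain := hf (inter_subset_right (s₁ := S)) v hv
      rw [← prefixGain_apply] at hgain
      rw [modularLB] at ih
      linarith
    · rwa [inter_insert_of_notMem hvS]

theorem modularLB_le [Fintype V] (hf : Submodular f) (hf0 : f ∅ = 0) (S : Finset V) :
    modularLB σ f S ≤ f S := by
  simpa [prefixSet_of_le σ le_rfl] using modularLB_inter_prefixSet_le σ hf hf0 S le_rfl

end ModularLB

theorem stmt_9 {V : Type*} [Fintype V] [DecidableEq V]
    (f : Finset V → ℝ) (hf : Submodular f) (hf0 : f ∅ = 0)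
    (σ : Fin (Fintype.card V) ≃ V) :
    (∀ S : Finset V, modularLB σ f S ≤ f S) ∧
    (∀ i ≤ Fintype.card V, modularLB σ f (prefixSet σ i) = f (prefixSet σ i)) ∧
    (∀ X : Finset V, ∃ σ' : Fin (Fintype.card V) ≃ V,
      prefixSet σ' X.card = X ∧
      (∀ S : Finset V, modularLB σ' f S ≤ f S) ∧
      modularLB σ' f X = f X) := by
  refine ⟨modularLB_le σ hf hf0, fun i hi => modularLB_prefixSet σ hf0 hi, fun X => ?_⟩
  obtain ⟨σ', hσ'⟩ := X.exists_equiv_fin_apply_mem_iff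
  have hpre : prefixSet σ' X.card = X := prefixSet_eq_of_forall_mem_iff σ' hσ'
  refine ⟨σ', hpre, modularLB_le σ' hf hf0, ?_⟩
  simpa [hpre] using modularLB_prefixSet σ' hf0 (card_le_univ X)
end
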